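/- arXiv:1910.11154 — 3 statements merged into one kernel-verified Lean document; each statement's English description precedes it below -/
import Mathlib

section
/- In the Hotelling model with n = 2 vendors on the circle, every location vector x ∈ [0,1]^2 is an equilibrium. -/
noncomputable section

/-- Shortest arc distance on the circle of circumference 1. -/
def circleDist (x y : ℝ) : ℝ := min |x - y + 1| (min |x - y| |x - y - 1|)

open scoped Classical

/-- The set of vendors nearest to the customer at `y`. -/
def nearest {n : ℕ} (ξ : Fin n → ℝ) (y : ℝ) : Finset (Fin n) :=
  Finset.univ.filter fun j => ∀ i, circleDist (ξ j) y ≤ circleDist (ξ i) y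

/-- Density of demand of customer `y` going to vendor `k`. -/
def rho {n : ℕ} (ξ : Fin n → ℝ) (k : Fin n) (y : ℝ) : ℝ :=
  if k ∈ nearest ξ y then (1 : ℝ) / (nearest ξ y).card else 0

/-- Profit of vendor `k`. -/
def profit {n : ℕ} (k : Fin n) (ξ : Fin n → ℝ) : ℝ :=
  ∫ y in (0:ℝ)..1, rho ξ k y

/-- Equilibrium: no vendor can strictly increase profit by unilateral relocation. -/
def IsEquilibrium {n : ℕ} (x : Fin n → ℝ) : Prop :=
  ∀ k : Fin n, ∀ x' ∈ Set.Icc (0:ℝ) 1,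
    profit k (Function.update x k x') ≤ profit k x

/-- Length of the cyclic gap `I_j = [x_j, x_{j+1}]` (for sorted `x` with `x 0 = 0`). -/
def gap {n : ℕ} [NeZero n] (x : Fin n → ℝ) (j : Fin n) : ℝ :=
  (if (j : ℕ) + 1 = n then 1 else 0) + x (j + 1) - x j

/-- The right endpoint of gap `I_j`, unwrapped to the real line. -/
def nextVal {n : ℕ} [NeZero n] (x : Fin n → ℝ) (j : Fin n) : ℝ :=
  (if (j : ℕ) + 1 = n then 1 else 0) + x (j + 1)

/-- Maximum cyclic gap length `|Ī|`. -/
def maxGap {n : ℕ} [NeZero n] (x : Fin n → ℝ) : ℝ := ⨆ j, gap x j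

/-!
With two vendors at `a` and `b`, the reflection `y ↦ a + b - y` of the circle swaps the two
vendors and preserves the uniform density of customers, so each vendor serves exactly half of
the market wherever the two stand. Profits are therefore independent of the locations, and no
relocation can increase them.
-/

open Function MeasureTheory Filter

/-- Demand share of a vendor at distance `u` from a customer, against a rival at distance `v`;
ties split the customer. -/
def share (u v : ℝ) : ℝ := if u ≤ v then (if v ≤ u then 1 / 2 else 1) else 0

theorem share_add_share_swap (u v : ℝ) : share u v + share v u = 1 := by
  unfold share
  split_ifs <;> linarith

theorem measurable_share {α : Type*} [MeasurableSpace α] {f g : α → ℝ}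
    (hf : Measurable f) (hg : Measurable g) : Measurable fun y => share (f y) (g y) :=
  Measurable.ite (measurableSet_le hf hg)
    (Measurable.ite (measurableSet_le hg hf) measurable_const measurable_const) measurable_const

theorem integral_share_of_periodic_of_even {g : ℝ → ℝ} (hper : Periodic g 1) (heven : g.Even)
    (hg : Measurable g) (a b : ℝ) :
    ∫ y in (0:ℝ)..1, share (g (a - y)) (g (b - y)) = 1 / 2 := by
  set f : ℝ → ℝ := fun y => share (g (a - y)) (g (b - y))
  have hint : ∀ c d : ℝ,
      IntervalIntegrable (fun y => share (g (c - y)) (g (d - y))) volume 0 1 :=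
    fun c d => (intervalIntegrable_const (c := (1 : ℝ))).mono_fun
      (measurable_share (hg.comp (measurable_const.sub measurable_id))
        (hg.comp (measurable_const.sub measurable_id))).aestronglyMeasurable
      (Eventually.of_forall fun y => by dsimp only; unfold share; split_ifs <;> norm_num)
  have hf_per : Periodic f 1 := fun y => by
    simp only [f, sub_add_eq_sub_sub, hper.sub_eq]
  have hswap :
      ∫ y in (0:ℝ)..1, share (g (b - y)) (g (a - y)) = ∫ y in (0:ℝ)..1, f y :=
    calc ∫ y in (0:ℝ)..1, share (g (b - y)) (g (a - y))
        = ∫ y in (0:ℝ)..1, f (a + b - y) := by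
          congr 1; ext y
          simp only [f, show a - (a + b - y) = -(b - y) by ring,
            show b - (a + b - y) = -(a - y) by ring, heven _]
      _ = ∫ y in (a + b - 1)..(a + b - 1) + 1, f y := by
          rw [intervalIntegral.integral_comp_sub_left]; norm_num
      _ = ∫ y in (0:ℝ)..1, f y := by
          rw [hf_per.intervalIntegral_add_eq, zero_add]
  have hsum :
      (∫ y in (0:ℝ)..1, f y) + ∫ y in (0:ℝ)..1, share (g (b - y)) (g (a - y)) = 1 := by
    rw [← intervalIntegral.integral_add (hint a b) (hint b a)]
    simp [share_add_share_swap]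
  linarith

theorem circleDist_eq_norm_coe {a y : ℝ} (h : |a - y| ≤ 1) :
    circleDist a y = ‖((a - y : ℝ) : UnitAddCircle)‖ := by
  rw [UnitAddCircle.norm_eq, circleDist]
  set t := a - y
  have hround : round t = -1 ∨ round t = 0 ∨ round t = 1 := by
    have hlt : |(round t : ℝ)| < 2 :=
      calc |(round t : ℝ)| = |t - (t - round t)| := by ring_nf
        _ ≤ |t| + |t - round t| := abs_sub _ _
        _ < 2 := by linarith [abs_sub_round t]
    have : |round t| < 2 := by exact_mod_cast hlt
    rw [abs_lt] at this
    omega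
  apply le_antisymm
  · rcases hround with h | h | h <;> simp [h]
  · refine le_min ?_ (le_min ?_ ?_)
    · simpa using round_le t (-1)
    · simpa using round_le t 0
    · simpa using round_le t 1

theorem rho_fin_two (ξ : Fin 2 → ℝ) (k : Fin 2) (y : ℝ) :
    rho ξ k y = share (circleDist (ξ k) y) (circleDist (ξ (k + 1)) y) := by
  fin_cases k <;>
  simp only [Fin.zero_eta, Fin.mk_one, Fin.isValue, zero_add, show (1 + 1 : Fin 2) = 0 from rfl,
    rho, nearest, share, Finset.mem_filter, Finset.card_filter, Fin.sum_univ_two,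
    Fin.forall_fin_two, Finset.mem_univ, le_refl, true_and, and_true] <;>
  split_ifs <;> norm_num

theorem profit_fin_two {ξ : Fin 2 → ℝ} (hξ : ∀ i, ξ i ∈ Set.Icc (0:ℝ) 1) (k : Fin 2) :
    profit k ξ = 1 / 2 := by
  have hnear : ∀ i, ∀ y ∈ Set.uIcc (0:ℝ) 1, |ξ i - y| ≤ 1 := by
    intro i y hy
    rw [Set.uIcc_of_le zero_le_one] at hy
    rw [abs_le]
    constructor <;> linarith [(hξ i).1, (hξ i).2, hy.1, hy.2]
  rw [profit, intervalIntegral.integral_congr fun y hy => by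
    rw [rho_fin_two, circleDist_eq_norm_coe (hnear k y hy),
      circleDist_eq_norm_coe (hnear (k + 1) y hy)]]
  exact integral_share_of_periodic_of_even (g := fun t => ‖(t : UnitAddCircle)‖)
    (fun t => by simp only [AddCircle.coe_add_period]) (fun t => by simp)
    (AddCircle.continuous_mk' 1).norm.measurable _ _

theorem two_vendors_equilibrium (x : Fin 2 → ℝ) (hx : ∀ i, x i ∈ Set.Icc (0:ℝ) 1) :
    IsEquilibrium x := by
  intro k x' hx'
  have hupdate : ∀ i, Function.update x k x' i ∈ Set.Icc (0:ℝ) 1 :=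
    forall_update_iff x (p := fun _ z => z ∈ Set.Icc (0:ℝ) 1) |>.mpr
      ⟨hx', fun i _ => hx i⟩
  rw [profit_fin_two hupdate, profit_fin_two hx]
end
end

section
/- If a location x = (x_1,…,x_n) with 0 = x_1 ≤ x_2 ≤ … ≤ x_n (n ≥ 2) is an equilibrium of the Hotelling model on the circle, then no point of the circle is occupied by 3 or more vendors. -/
noncomputable section

open scoped Classical

/-!
If three vendors share a location `p`, each of them receives at most a third of every customer it
serves. On an arc between neighbouring vendors, a vendor outside the arc can only serve customers
in the half of the arc next to an endpoint at its own location, and among the arcs of positive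
length `p` starts at most one and ends at most one. So each vendor at `p` earns at most `G / 3`,
where `G` is the length of the longest arc, while moving to the midpoint of that arc would earn it
at least `G / 2`.
-/

open Set

section CircleDist

lemma circleDist_le_abs_sub (u y : ℝ) : circleDist u y ≤ |u - y| :=
  (min_le_right _ _).trans (min_le_left _ _)

lemma circleDist_sub_one_le (v y : ℝ) : circleDist (v - 1) y ≤ |v - y| :=
  (min_le_left _ _).trans_eq (by ring_nf)

lemma continuous_circleDist (u : ℝ) : Continuous (circleDist u) := by
  unfold circleDist; fun_prop

variable {u y α β : ℝ}

lemma min_sub_le_circleDist (hu0 : 0 ≤ u) (hu1 : u ≤ 1) (hα : 0 ≤ α) (hβ : β ≤ 1)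
    (hu : u ≤ α ∨ β ≤ u) : min (y - α) (β - y) ≤ circleDist u y := by
  have hl := min_le_left (y - α) (β - y)
  have hr := min_le_right (y - α) (β - y)
  refine le_min ?_ (le_min ?_ ?_)
  · linarith [le_abs_self (u - y + 1)]
  · rcases hu with hu | hu
    · linarith [neg_le_abs (u - y)]
    · linarith [le_abs_self (u - y)]
  · linarith [neg_le_abs (u - y - 1)]

lemma sub_lt_circleDist_of_lt_midpoint (hu0 : 0 ≤ u) (hu1 : u ≤ 1) (hα : 0 ≤ α) (hβ : β ≤ 1)
    (hu : u ≤ α ∨ β ≤ u) (huα : u ≠ α) (huα' : u ≠ α + 1) (hy : α < y) (hym : y < (α + β) / 2) :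
    y - α < circleDist u y := by
  refine lt_min ?_ (lt_min ?_ ?_)
  · linarith [le_abs_self (u - y + 1)]
  · rcases hu with hu | hu
    · linarith [neg_le_abs (u - y), lt_of_le_of_ne hu huα]
    · linarith [le_abs_self (u - y)]
  · have : u < α + 1 := by
      rcases hu with hu | hu
      · linarith
      · exact lt_of_le_of_ne (by linarith) huα'
    linarith [neg_le_abs (u - y - 1)]

lemma sub_lt_circleDist_of_midpoint_lt (hu0 : 0 ≤ u) (hu1 : u ≤ 1) (hα : 0 ≤ α) (hβ : β ≤ 1)
    (hu : u ≤ α ∨ β ≤ u) (huβ : u ≠ β) (huβ' : u + 1 ≠ β) (hym : (α + β) / 2 < y) (hy : y < β) :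
    β - y < circleDist u y := by
  refine lt_min ?_ (lt_min ?_ ?_)
  · have : β < u + 1 := by
      rcases hu with hu | hu
      · exact lt_of_le_of_ne (by linarith) huβ'.symm
      · linarith
    linarith [le_abs_self (u - y + 1)]
  · rcases hu with hu | hu
    · linarith [neg_le_abs (u - y)]
    · linarith [le_abs_self (u - y), lt_of_le_of_ne hu huβ.symm]
  · linarith [neg_le_abs (u - y - 1)]

end CircleDist

section Rho

variable {n : ℕ} {x : Fin n → ℝ} {k : Fin n} {y : ℝ}

lemma mem_nearest {j : Fin n} :
    j ∈ nearest x y ↔ ∀ i, circleDist (x j) y ≤ circleDist (x i) y := by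
  simp [nearest]

lemma rho_nonneg (x : Fin n → ℝ) (k : Fin n) (y : ℝ) : 0 ≤ rho x k y := by
  unfold rho; split <;> positivity

lemma rho_eq_zero_of_lt {j : Fin n} (h : circleDist (x j) y < circleDist (x k) y) :
    rho x k y = 0 :=
  if_neg fun hk => (mem_nearest.1 hk j).not_gt h

lemma rho_eq_one_of_forall_lt (h : ∀ i ≠ k, circleDist (x k) y < circleDist (x i) y) :
    rho x k y = 1 := by
  have hnearest : nearest x y = {k} := by
    ext i
    simp only [Finset.mem_singleton, mem_nearest]
    refine ⟨fun hi => by_contra fun hik => (hi k).not_gt (h i hik), ?_⟩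
    rintro rfl j
    rcases eq_or_ne j i with rfl | hj
    · exact le_rfl
    · exact (h j hj).le
  simp [rho, hnearest]

lemma rho_le_one_div_card {S : Finset (Fin n)} (hk : k ∈ S) (hS : ∀ j ∈ S, x j = x k) :
    rho x k y ≤ 1 / S.card := by
  unfold rho
  split_ifs with hnear
  · have hsub : S ⊆ nearest x y := fun j hj =>
      mem_nearest.2 fun i => (hS j hj).symm ▸ mem_nearest.1 hnear i
    gcongr
    exact_mod_cast Finset.card_pos.2 ⟨k, hk⟩
  · positivity

lemma measurableSet_mem_nearest (x : Fin n → ℝ) (j : Fin n) :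
    MeasurableSet {y | j ∈ nearest x y} := by
  simp only [mem_nearest, ofPred_forall]
  exact .iInter fun i =>
    measurableSet_le (continuous_circleDist _).measurable (continuous_circleDist _).measurable

lemma measurable_rho (x : Fin n → ℝ) (k : Fin n) : Measurable (rho x k) := by
  have hcard : ∀ y, ((nearest x y).card : ℝ) = ∑ j, {y | j ∈ nearest x y}.indicator 1 y := by
    intro y
    simp only [indicator_apply, mem_ofPred_eq, Pi.one_apply]
    simp
  unfold rho
  simp only [hcard]
  exact Measurable.ite (measurableSet_mem_nearest x k)
    (measurable_const.div (Finset.measurable_sum _ fun j _ =>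
      measurable_const.indicator (measurableSet_mem_nearest x j))) measurable_const

lemma intervalIntegrable_rho (x : Fin n → ℝ) (k : Fin n) (a b : ℝ) :
    IntervalIntegrable (rho x k) MeasureTheory.volume a b := by
  refine (intervalIntegrable_const (c := (1 : ℝ))).mono_fun
    (measurable_rho x k).aestronglyMeasurable (MeasureTheory.ae_of_all _ fun y => ?_)
  dsimp only
  rw [Real.norm_of_nonneg (rho_nonneg x k y), norm_one]
  unfold rho
  split_ifs with hk
  · exact div_le_one_of_le₀ (by exact_mod_cast Finset.card_pos.2 ⟨k, hk⟩) (Nat.cast_nonneg _)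
  · exact zero_le_one

lemma integral_rho_le_profit (x : Fin n → ℝ) (k : Fin n) {a b : ℝ} (ha : 0 ≤ a) (hab : a ≤ b)
    (hb : b ≤ 1) : ∫ y in a..b, rho x k y ≤ profit k x :=
  intervalIntegral.integral_mono_interval ha hab hb
    (MeasureTheory.ae_of_all _ (rho_nonneg x k)) (intervalIntegrable_rho x k 0 1)

lemma integral_rho_le_mul {s a b : ℝ} (hs : ∀ y, rho x k y ≤ s) (hab : a ≤ b) :
    ∫ y in a..b, rho x k y ≤ (b - a) * s := by
  simpa using intervalIntegral.integral_mono_on hab (intervalIntegrable_rho x k a b)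
    intervalIntegrable_const fun y _ => hs y

end Rho

section Halves

variable {n : ℕ} {x : Fin n → ℝ} {k j : Fin n} {α β : ℝ}

lemma integral_rho_left_half_eq_zero (hk0 : 0 ≤ x k) (hk1 : x k ≤ 1) (hα : 0 ≤ α) (hαβ : α ≤ β)
    (hβ : β ≤ 1) (hk : x k ≤ α ∨ β ≤ x k) (hkα : x k ≠ α) (hkα' : x k ≠ α + 1) (hj : x j = α) :
    ∫ y in α..(α + β) / 2, rho x k y = 0 := by
  rw [intervalIntegral.integral_congr_Ioo_of_le (g := fun _ => 0) (by linarith),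
    intervalIntegral.integral_zero]
  rintro y ⟨hαy, hym⟩
  refine rho_eq_zero_of_lt (j := j) ((circleDist_le_abs_sub _ _).trans_lt ?_)
  rw [hj, abs_of_neg (by linarith), neg_sub]
  exact sub_lt_circleDist_of_lt_midpoint hk0 hk1 hα hβ hk hkα hkα' hαy hym

lemma integral_rho_right_half_eq_zero (hk0 : 0 ≤ x k) (hk1 : x k ≤ 1) (hα : 0 ≤ α) (hαβ : α ≤ β)
    (hβ : β ≤ 1) (hk : x k ≤ α ∨ β ≤ x k) (hkβ : x k ≠ β) (hkβ' : x k + 1 ≠ β)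
    (hj : x j = β ∨ x j + 1 = β) :
    ∫ y in (α + β) / 2..β, rho x k y = 0 := by
  rw [intervalIntegral.integral_congr_Ioo_of_le (g := fun _ => 0) (by linarith),
    intervalIntegral.integral_zero]
  rintro y ⟨hmy, hyβ⟩
  have hdist : circleDist (x j) y ≤ β - y := by
    rcases hj with hj | hj
    · exact (circleDist_le_abs_sub _ _).trans (by rw [hj, abs_of_pos (by linarith)])
    · rw [eq_sub_of_add_eq hj]
      exact (circleDist_sub_one_le _ _).trans (abs_of_pos (by linarith)).le
  exact rho_eq_zero_of_lt (j := j)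
    (hdist.trans_lt (sub_lt_circleDist_of_midpoint_lt hk0 hk1 hα hβ hk hkβ hkβ' hmy hyβ))

end Halves

lemma Finset.sum_le_of_le_of_nonpos_off_subsingleton {ι : Type*} {s : Finset ι} {f : ι → ℝ}
    {c : ℝ} (P : ι → Prop) (hc : 0 ≤ c) (hP : ∀ i ∈ s, ∀ j ∈ s, P i → P j → i = j)
    (hle : ∀ i ∈ s, f i ≤ c) (hnonpos : ∀ i ∈ s, ¬ P i → f i ≤ 0) : ∑ i ∈ s, f i ≤ c := by
  by_cases h : ∃ i ∈ s, P i
  · obtain ⟨i, hi, hPi⟩ := h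
    rw [← Finset.add_sum_erase s f hi]
    have hrest : ∑ j ∈ s.erase i, f j ≤ 0 := Finset.sum_nonpos fun j hj =>
      hnonpos j (Finset.mem_of_mem_erase hj) fun hPj =>
        Finset.ne_of_mem_erase hj (hP j (Finset.mem_of_mem_erase hj) i hi hPj hPi)
    linarith [hle i hi]
  · push Not at h
    exact (Finset.sum_nonpos fun i hi => hnonpos i hi (h i hi)).trans hc

section Monotone

variable {a : ℕ → ℝ} {p : ℝ} {i j : ℕ}

lemma Monotone.eq_of_left_endpoints_eq_mod_one (ha : Monotone a) (ha0 : ∀ i, 0 ≤ a i)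
    (ha1 : ∀ i, a i ≤ 1) (hi : (p = a i ∨ p = a i + 1) ∧ a i < a (i + 1))
    (hj : (p = a j ∨ p = a j + 1) ∧ a j < a (j + 1)) : i = j := by
  by_contra hne
  wlog hij : i < j generalizing i j
  · exact this hj hi (Ne.symm hne) (by omega)
  have := ha (Nat.succ_le_of_lt hij)
  rcases hi.1 with rfl | rfl <;> rcases hj.1 with h | h <;>
    linarith [ha0 i, ha1 (j + 1), hi.2, hj.2]

lemma Monotone.eq_of_right_endpoints_eq_mod_one (ha : Monotone a) (ha0 : ∀ i, 0 ≤ a i)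
    (ha1 : ∀ i, a i ≤ 1) (hi : (p = a (i + 1) ∨ p + 1 = a (i + 1)) ∧ a i < a (i + 1))
    (hj : (p = a (j + 1) ∨ p + 1 = a (j + 1)) ∧ a j < a (j + 1)) : i = j := by
  by_contra hne
  wlog hij : i < j generalizing i j
  · exact this hj hi (Ne.symm hne) (by omega)
  have := ha (Nat.succ_le_of_lt hij)
  rcases hi.1 with h | h <;> rcases hj.1 with h' | h' <;>
    linarith [ha0 i, ha1 (j + 1), hi.2, hj.2]

end Monotone

section CutPoint

variable {n : ℕ} {x : Fin n → ℝ} {i : ℕ}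

/-- The vendor locations followed by `1`: consecutive values bound the arcs between neighbouring
vendors, the last one wrapping around from `x (n - 1)` to `x 0 = 0 ≡ 1`. -/
def cutPoint (x : Fin n → ℝ) (i : ℕ) : ℝ := if h : i < n then x ⟨i, h⟩ else 1

lemma cutPoint_of_lt (h : i < n) : cutPoint x i = x ⟨i, h⟩ := dif_pos h

lemma cutPoint_of_le (h : n ≤ i) : cutPoint x i = 1 := dif_neg (not_lt.2 h)

lemma cutPoint_zero [NeZero n] (hx0 : x 0 = 0) : cutPoint x 0 = 0 := by
  rw [cutPoint_of_lt (NeZero.pos n)]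
  exact hx0

lemma cutPoint_le_one (hx1 : ∀ j, x j ≤ 1) (i : ℕ) : cutPoint x i ≤ 1 := by
  unfold cutPoint
  split_ifs
  exacts [hx1 _, le_rfl]

lemma monotone_cutPoint (hmono : Monotone x) (hx1 : ∀ j, x j ≤ 1) : Monotone (cutPoint x) := by
  intro i j hij
  by_cases hj : j < n
  · rw [cutPoint_of_lt (hij.trans_lt hj), cutPoint_of_lt hj]
    exact hmono (Fin.mk_le_mk.2 hij)
  · rw [cutPoint_of_le (not_lt.1 hj)]
    exact cutPoint_le_one hx1 i

lemma zero_le_cutPoint [NeZero n] (hx0 : x 0 = 0) (hmono : Monotone x) (hx1 : ∀ j, x j ≤ 1)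
    (i : ℕ) : 0 ≤ cutPoint x i :=
  cutPoint_zero hx0 ▸ monotone_cutPoint hmono hx1 (Nat.zero_le i)

lemma le_cutPoint_or_cutPoint_succ_le (hmono : Monotone x) (hi : i < n) (k : Fin n) :
    x k ≤ cutPoint x i ∨ cutPoint x (i + 1) ≤ x k := by
  rcases le_or_gt (k : ℕ) i with hk | hk
  · left
    rw [cutPoint_of_lt hi]
    exact hmono hk
  · right
    rw [cutPoint_of_lt (by omega)]
    exact hmono (Fin.mk_le_of_le_val hk)

lemma exists_eq_cutPoint_succ [NeZero n] (hx0 : x 0 = 0) (i : ℕ) :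
    ∃ j, x j = cutPoint x (i + 1) ∨ x j + 1 = cutPoint x (i + 1) := by
  by_cases h : i + 1 < n
  · exact ⟨⟨i + 1, h⟩, .inl (cutPoint_of_lt h).symm⟩
  · exact ⟨0, .inr (by rw [hx0, cutPoint_of_le (not_lt.1 h), zero_add])⟩

lemma exists_max_cutPoint_gap [NeZero n] (hx0 : x 0 = 0) :
    ∃ i < n, 0 < cutPoint x (i + 1) - cutPoint x i ∧
      ∀ j < n, cutPoint x (j + 1) - cutPoint x j ≤ cutPoint x (i + 1) - cutPoint x i := by
  obtain ⟨i, hi, hmax⟩ := Finset.exists_max_image (Finset.range n)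
    (fun i => cutPoint x (i + 1) - cutPoint x i) ⟨0, Finset.mem_range.2 (NeZero.pos n)⟩
  refine ⟨i, Finset.mem_range.1 hi, ?_, fun j hj => hmax j (Finset.mem_range.2 hj)⟩
  have hsum : ∑ j ∈ Finset.range n, (cutPoint x (j + 1) - cutPoint x j) = 1 := by
    rw [Finset.sum_range_sub, cutPoint_of_le le_rfl, cutPoint_zero hx0, sub_zero]
  by_contra! hnonpos
  have := Finset.sum_nonpos fun j hj => (hmax j hj).trans hnonpos
  linarith

end CutPoint

lemma profit_eq_sum_integral_half_arcs {n : ℕ} [NeZero n] {x : Fin n → ℝ} (hx0 : x 0 = 0)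
    (k : Fin n) :
    profit k x =
      (∑ i ∈ Finset.range n,
        ∫ y in cutPoint x i..(cutPoint x i + cutPoint x (i + 1)) / 2, rho x k y) +
      ∑ i ∈ Finset.range n,
        ∫ y in (cutPoint x i + cutPoint x (i + 1)) / 2..cutPoint x (i + 1), rho x k y := by
  rw [← Finset.sum_add_distrib, profit, ← cutPoint_zero hx0, ← cutPoint_of_le (le_refl n),
    ← intervalIntegral.sum_integral_adjacent_intervals fun i _ => intervalIntegrable_rho x k _ _]
  exact Finset.sum_congr rfl fun i _ => (intervalIntegral.integral_add_adjacent_intervals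
    (intervalIntegrable_rho x k _ _) (intervalIntegrable_rho x k _ _)).symm

lemma profit_le_mul_of_rho_le {n : ℕ} [NeZero n] {x : Fin n → ℝ} (hx0 : x 0 = 0)
    (hmono : Monotone x) (hx1 : ∀ j, x j ≤ 1) {k : Fin n} {s G : ℝ}
    (hs : ∀ y, rho x k y ≤ s) (hG : ∀ i < n, cutPoint x (i + 1) - cutPoint x i ≤ G) :
    profit k x ≤ s * G := by
  rw [profit_eq_sum_integral_half_arcs hx0, show s * G = s * G / 2 + s * G / 2 by ring]
  set a := cutPoint x
  have ha0 : ∀ i, 0 ≤ a i := zero_le_cutPoint hx0 hmono hx1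
  have ha1 : ∀ i, a i ≤ 1 := cutPoint_le_one hx1
  have hamono : Monotone a := monotone_cutPoint hmono hx1
  have hk0 : 0 ≤ x k := hx0 ▸ hmono (Fin.zero_le k)
  have hs0 : 0 ≤ s := (rho_nonneg x k 0).trans (hs 0)
  have hG0 : 0 ≤ G := (sub_nonneg.2 (hamono (Nat.le_succ 0))).trans (hG 0 (NeZero.pos n))
  have hhalf : ∀ i < n, ∀ c d, c ≤ d → d - c = (a (i + 1) - a i) / 2 →
      ∫ y in c..d, rho x k y ≤ s * G / 2 := fun i hi c d hcd hlen =>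
    (integral_rho_le_mul hs hcd).trans (by nlinarith [hG i hi])
  refine add_le_add
    (Finset.sum_le_of_le_of_nonpos_off_subsingleton
      (fun i => (x k = a i ∨ x k = a i + 1) ∧ a i < a (i + 1)) (by positivity)
      (fun i _ j _ hi hj => hamono.eq_of_left_endpoints_eq_mod_one ha0 ha1 hi hj)
      (fun i hi => hhalf i (Finset.mem_range.1 hi) _ _ (by linarith [hamono i.le_succ]) (by ring))
      fun i hi hP => ?_)
    (Finset.sum_le_of_le_of_nonpos_off_subsingleton
      (fun i => (x k = a (i + 1) ∨ x k + 1 = a (i + 1)) ∧ a i < a (i + 1)) (by positivity)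
      (fun i _ j _ hi hj => hamono.eq_of_right_endpoints_eq_mod_one ha0 ha1 hi hj)
      (fun i hi => hhalf i (Finset.mem_range.1 hi) _ _ (by linarith [hamono i.le_succ]) (by ring))
      fun i hi hP => ?_)
  all_goals
    have hi := Finset.mem_range.1 hi
    rcases (hamono i.le_succ).eq_or_lt with hdeg | hlt
    · rw [hdeg, add_self_div_two, intervalIntegral.integral_same]
  · simp only [hlt, and_true, not_or] at hP
    exact (integral_rho_left_half_eq_zero hk0 (hx1 k) (ha0 i) hlt.le (ha1 (i + 1))
      (le_cutPoint_or_cutPoint_succ_le hmono hi k) hP.1 hP.2 (cutPoint_of_lt hi).symm).le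
  · simp only [hlt, and_true, not_or] at hP
    obtain ⟨j, hj⟩ := exists_eq_cutPoint_succ hx0 i
    exact (integral_rho_right_half_eq_zero hk0 (hx1 k) (ha0 i) hlt.le (ha1 (i + 1))
      (le_cutPoint_or_cutPoint_succ_le hmono hi k) hP.1 hP.2 hj).le

lemma half_le_profit_update_midpoint {n : ℕ} {x : Fin n → ℝ} {k : Fin n} {α β : ℝ}
    (hα : 0 ≤ α) (hαβ : α ≤ β) (hβ : β ≤ 1) (hx0 : ∀ i ≠ k, 0 ≤ x i) (hx1 : ∀ i ≠ k, x i ≤ 1)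
    (hside : ∀ i ≠ k, x i ≤ α ∨ β ≤ x i) :
    (β - α) / 2 ≤ profit k (Function.update x k ((α + β) / 2)) := by
  set m := (α + β) / 2 with hm
  set r := (β - α) / 4 with hr
  have hone : ∀ y ∈ Ioo (m - r) (m + r), 1 ≤ rho (Function.update x k m) k y := by
    rintro y ⟨hly, hyr⟩
    refine (rho_eq_one_of_forall_lt fun i hi => ?_).ge
    rw [Function.update_self, Function.update_of_ne hi]
    calc circleDist m y ≤ |m - y| := circleDist_le_abs_sub m y
      _ < r := abs_lt.2 ⟨by linarith, by linarith⟩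
      _ ≤ min (y - α) (β - y) := le_min (by linarith) (by linarith)
      _ ≤ circleDist (x i) y := min_sub_le_circleDist (hx0 i hi) (hx1 i hi) hα hβ (hside i hi)
  calc (β - α) / 2 = ∫ _ in (m - r)..(m + r), (1 : ℝ) := by simp; ring
    _ ≤ ∫ y in (m - r)..(m + r), rho (Function.update x k m) k y :=
      intervalIntegral.integral_mono_on_of_le_Ioo (by linarith) intervalIntegrable_const
        (intervalIntegrable_rho _ k _ _) hone
    _ ≤ profit k (Function.update x k m) :=
      integral_rho_le_profit _ k (by linarith) (by linarith) (by linarith)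

theorem equilibrium_at_most_two_per_point_general {n : ℕ} [NeZero n] (x : Fin n → ℝ)
    (hx0 : x 0 = 0) (hmono : Monotone x) (hx1 : ∀ j, x j ≤ 1)
    (heq : IsEquilibrium x) :
    ∀ p : ℝ, (Finset.univ.filter fun k => x k = p).card ≤ 2 := by
  intro p
  by_contra! hcard
  set S := Finset.univ.filter fun k => x k = p
  obtain ⟨k, hk⟩ := Finset.card_pos.1 (by omega : 0 < S.card)
  have hS : ∀ j ∈ S, x j = x k := fun j hj =>
    (Finset.mem_filter.1 hj).2.trans (Finset.mem_filter.1 hk).2.symm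
  have hrho : ∀ y, rho x k y ≤ 1 / 3 := fun y => (rho_le_one_div_card hk hS).trans
    (one_div_le_one_div_of_le (by norm_num) (by exact_mod_cast hcard))
  obtain ⟨i, hi, hpos, hmax⟩ := exists_max_cutPoint_gap hx0
  have hα := zero_le_cutPoint hx0 hmono hx1 i
  have hβ := cutPoint_le_one hx1 (i + 1)
  have hupper := profit_le_mul_of_rho_le hx0 hmono hx1 hrho hmax
  have hlower := half_le_profit_update_midpoint (k := k) hα (sub_pos.1 hpos).le hβ
    (fun j _ => hx0 ▸ hmono (Fin.zero_le j)) (fun j _ => hx1 j)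
    fun j _ => le_cutPoint_or_cutPoint_succ_le hmono hi j
  have := heq k ((cutPoint x i + cutPoint x (i + 1)) / 2) ⟨by linarith, by linarith⟩
  linarith

theorem equilibrium_at_most_two_per_point {n : ℕ} [NeZero n] (hn : 2 ≤ n) (x : Fin n → ℝ)
    (hx0 : x 0 = 0) (hmono : Monotone x) (hx1 : ∀ j, x j ≤ 1)
    (heq : IsEquilibrium x) :
    ∀ p : ℝ, (Finset.univ.filter fun k => x k = p).card ≤ 2 :=
  equilibrium_at_most_two_per_point_general x hx0 hmono hx1 heq
end
end

section
/- Suppose n vendors (n ≥ 4) are located on the circle with exactly two vendors at each of n/2 distinct points (n even), and the distinct points are equally spaced. Then this location is an equilibrium, and every vendor earns profit 1/n. -/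
noncomputable section

open scoped Classical

/-!
On `[0, 1]`, `circleDist` is the distance of the circle `ℝ / ℤ`, so every profit is an integral
over `UnitAddCircle`, on which a closed ball of radius `r` has measure `min 1 (2 * r)`.
With `N = n / 2` sites on the grid `ℤ / N`, every customer lies within `1 / (2N)` of a site and
distinct sites are `1 / N` apart, so each vendor shares with its partner exactly the customers
within `1 / (2N)` of their site: profit `1 / (2N) = 1 / n`.
When one vendor moves, its partner keeps every site occupied. If it moves onto a site it still
shares every customer it serves and serves only customers within `1 / (2N)`; if it moves strictly
between neighbouring sites `l < x < r`, it serves only customers at least as close to `x` as to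
`l` and `r`, an arc of length `(r - l) / 2 = 1 / (2N)`. Either way it earns at most `1 / n`.
-/

open Set Metric MeasureTheory

namespace UnitAddCircle

lemma norm_coe_le_abs_sub_intCast (s : ℝ) (j : ℤ) : ‖(s : UnitAddCircle)‖ ≤ |s - j| :=
  norm_eq ▸ round_le s j

lemma dist_coe_le (a b : ℝ) : dist (a : UnitAddCircle) b ≤ |a - b| := by
  rw [dist_eq_norm, ← AddCircle.coe_sub]
  simpa using norm_coe_le_abs_sub_intCast (a - b) 0

lemma coe_eq_coe_of_sub_eq_intCast {a b : ℝ} (j : ℤ) (h : a - b = j) :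
    (a : UnitAddCircle) = b := by
  rw [← sub_eq_zero, ← AddCircle.coe_sub, h]
  exact (AddCircle.coe_eq_zero_iff 1).mpr ⟨j, by simp⟩

lemma exists_coe_eq_abs_sub_eq_dist (z : UnitAddCircle) (x : ℝ) :
    ∃ t : ℝ, (t : UnitAddCircle) = z ∧ |t - x| = dist z x := by
  obtain ⟨s, rfl⟩ := QuotientAddGroup.mk_surjective z
  refine ⟨s - round (s - x),
    coe_eq_coe_of_sub_eq_intCast (-round (s - x)) (by push_cast; ring), ?_⟩
  change _ = dist (s : UnitAddCircle) x
  rw [dist_eq_norm, ← AddCircle.coe_sub, norm_eq, sub_right_comm]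

lemma volume_sphere_eq_zero (z : UnitAddCircle) (r : ℝ) : volume (sphere z r) = 0 := by
  obtain ⟨x, rfl⟩ := QuotientAddGroup.mk_surjective z
  have hsub : sphere (x : UnitAddCircle) r ⊆ closedBall ↑(x - r) 0 ∪ closedBall ↑(x + r) 0 := by
    intro w hw
    obtain ⟨t, rfl, ht⟩ := exists_coe_eq_abs_sub_eq_dist w x
    rw [mem_sphere.mp hw] at ht
    rcases abs_eq (dist_nonneg.trans_eq (mem_sphere.mp hw)) |>.mp ht with h | h
    · exact .inr (by rw [closedBall_zero, mem_singleton_iff]; congr 1; linarith)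
    · exact .inl (by rw [closedBall_zero, mem_singleton_iff]; congr 1; linarith)
  refine measure_mono_null hsub (measure_union_null ?_ ?_) <;>
    simp only [AddCircle.volume_closedBall, mul_zero, min_eq_right zero_le_one,
      ENNReal.ofReal_zero]

section Grid

variable {N : ℕ}

lemma exists_dist_intCast_div_le (hN : 0 < N) (z : UnitAddCircle) :
    ∃ m : ℤ, dist z ((m / N : ℝ) : UnitAddCircle) ≤ 1 / (2 * N) := by
  obtain ⟨t, rfl⟩ := QuotientAddGroup.mk_surjective z
  have hN' : (0 : ℝ) < N := by exact_mod_cast hN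
  refine ⟨round (t * N), (dist_coe_le _ _).trans ?_⟩
  rw [show t - round (t * N) / N = (t * N - round (t * N)) / N by field_simp, abs_div,
    abs_of_pos hN', div_le_div_iff₀ hN' (by positivity)]
  nlinarith [abs_sub_round (t * N)]

lemma coe_intCast_div_eq_emod (hN : 0 < N) (m : ℤ) :
    ((m / N : ℝ) : UnitAddCircle) = (((m % N : ℤ) : ℝ) / N : ℝ) := by
  have hN' : (N : ℝ) ≠ 0 := by positivity
  refine coe_eq_coe_of_sub_eq_intCast (m / N) ?_
  have h := Int.emod_add_mul_ediv m N
  rw [div_sub_div_same, div_eq_iff hN']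
  have h' : ((m % N + N * (m / N) : ℤ) : ℝ) = m := by exact_mod_cast h
  push_cast at h'
  linarith

lemma inv_le_dist_natCast_div {a b : ℕ} (ha : a < N) (hb : b < N) (hab : a ≠ b) :
    1 / N ≤ dist ((a / N : ℝ) : UnitAddCircle) ((b / N : ℝ) : UnitAddCircle) := by
  have hN : (0 : ℝ) < N := by exact_mod_cast (Nat.zero_lt_of_lt ha)
  set s : ℝ := (a - b : ℤ) / N
  set j : ℤ := a - b - N * round s
  have hj : j ≠ 0 := by
    intro h0
    have hdvd : (N : ℤ) ∣ (a : ℤ) - b := ⟨round s, by omega⟩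
    have := Int.eq_zero_of_abs_lt_dvd hdvd (abs_lt.mpr ⟨by omega, by omega⟩)
    omega
  have hs : s - round s = j / N := by
    simp only [s, j]; push_cast; field_simp
  rw [dist_eq_norm, ← AddCircle.coe_sub, ← sub_div, norm_eq]
  have hcast : ((a : ℝ) - b) = ((a - b : ℤ) : ℝ) := by push_cast; ring
  rw [hcast, hs, abs_div, abs_of_pos hN]
  gcongr
  exact_mod_cast Int.one_le_abs hj

end Grid

/-- The points served from `x` form the arc `[(l + x) / 2, (x + r) / 2]`, centred at
`(l + 2 * x + r) / 4`. -/
lemma dist_le_of_closer_than_neighbours {l x r : ℝ} (hl : l < x) (hr : x < r)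
    {z : UnitAddCircle}
    (hzl : dist (x : UnitAddCircle) z ≤ dist (l : UnitAddCircle) z)
    (hzr : dist (x : UnitAddCircle) z ≤ dist (r : UnitAddCircle) z) :
    dist z (((l + 2 * x + r) / 4 : ℝ) : UnitAddCircle) ≤ (r - l) / 4 := by
  obtain ⟨t, rfl, ht⟩ := exists_coe_eq_abs_sub_eq_dist z x
  rw [dist_comm] at ht
  have htl : |t - x| ≤ |t - l| := by
    rw [ht]; exact hzl.trans (by rw [dist_comm]; exact dist_coe_le t l)
  have htr : |t - x| ≤ |t - r| := by
    rw [ht]; exact hzr.trans (by rw [dist_comm]; exact dist_coe_le t r)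
  refine (dist_coe_le _ _).trans (abs_le.mpr ⟨?_, ?_⟩)
  · cases abs_cases (t - x) <;> cases abs_cases (t - l) <;> linarith
  · cases abs_cases (t - x) <;> cases abs_cases (t - r) <;> linarith

lemma integral_indicator_closedBall (c : UnitAddCircle) {r : ℝ} (hr : 0 ≤ r) (v : ℝ) :
    ∫ z, (closedBall c r).indicator (fun _ => v) z = min 1 (2 * r) * v := by
  rw [integral_indicator_const v measurableSet_closedBall, smul_eq_mul, measureReal_def,
    AddCircle.volume_closedBall, ENNReal.toReal_ofReal (by positivity)]

lemma integral_le_of_le_indicator_closedBall {f : UnitAddCircle → ℝ} (hf : 0 ≤ f)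
    {c : UnitAddCircle} {r v : ℝ} (hr : 0 ≤ r)
    (h : ∀ z, f z ≤ (closedBall c r).indicator (fun _ => v) z) :
    ∫ z, f z ≤ min 1 (2 * r) * v := by
  rw [← integral_indicator_closedBall c hr v]
  exact integral_mono_of_nonneg (.of_forall hf)
    ((integrable_const v).indicator measurableSet_closedBall) (.of_forall h)

end UnitAddCircle

lemma circleDist_eq_dist {a b : ℝ} (h : |a - b| ≤ 1) :
    circleDist a b = dist (a : UnitAddCircle) b := by
  rw [dist_eq_norm, ← AddCircle.coe_sub, UnitAddCircle.norm_eq]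
  have hj : round (a - b) = -1 ∨ round (a - b) = 0 ∨ round (a - b) = 1 := by
    have h₁ : ((-2 : ℤ) : ℝ) < round (a - b) := by
      have := sub_half_lt_round (a - b); push_cast; linarith [(abs_le.mp h).1]
    have h₂ : (round (a - b) : ℝ) < ((2 : ℤ) : ℝ) := by
      have := round_le_add_half (a - b); push_cast; linarith [(abs_le.mp h).2]
    have := Int.cast_lt.mp h₁; have := Int.cast_lt.mp h₂
    omega
  refine le_antisymm ?_ ?_
  · rcases hj with hj | hj | hj <;> simp only [hj, circleDist] <;> push_cast
    · exact (min_le_left _ _).trans_eq (by ring_nf)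
    · exact (min_le_right _ _).trans (min_le_left _ _) |>.trans_eq (by ring_nf)
    · exact (min_le_right _ _).trans (min_le_right _ _)
  · have h := fun j : ℤ => round_le (a - b) j
    refine le_min ?_ (le_min ?_ ?_)
    · simpa using h (-1)
    · simpa using h 0
    · simpa using h 1

section CircleModel

variable {n : ℕ}

def circleNearest (P : Fin n → UnitAddCircle) (z : UnitAddCircle) : Finset (Fin n) :=
  Finset.univ.filter fun j => ∀ i, dist (P j) z ≤ dist (P i) z

def circleShare (P : Fin n → UnitAddCircle) (k : Fin n) (z : UnitAddCircle) : ℝ :=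
  if k ∈ circleNearest P z then 1 / (circleNearest P z).card else 0

lemma nearest_eq_circleNearest {ξ : Fin n → ℝ} {y : ℝ} (hξ : ∀ i, ξ i ∈ Icc (0 : ℝ) 1)
    (hy : y ∈ Icc (0 : ℝ) 1) :
    nearest ξ y = circleNearest (fun i => (ξ i : UnitAddCircle)) y := by
  have h : ∀ i, circleDist (ξ i) y = dist (ξ i : UnitAddCircle) y := fun i =>
    circleDist_eq_dist (abs_le.mpr ⟨by linarith [(hξ i).1, hy.2], by linarith [(hξ i).2, hy.1]⟩)
  simp only [nearest, circleNearest, h]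

lemma rho_eq_circleShare {ξ : Fin n → ℝ} {y : ℝ} (hξ : ∀ i, ξ i ∈ Icc (0 : ℝ) 1)
    (hy : y ∈ Icc (0 : ℝ) 1) (k : Fin n) :
    rho ξ k y = circleShare (fun i => (ξ i : UnitAddCircle)) k y := by
  rw [rho, circleShare, nearest_eq_circleNearest hξ hy]

lemma profit_eq_integral_circleShare {ξ : Fin n → ℝ} (hξ : ∀ i, ξ i ∈ Icc (0 : ℝ) 1)
    (k : Fin n) :
    profit k ξ = ∫ z, circleShare (fun i => (ξ i : UnitAddCircle)) k z := by
  have h := UnitAddCircle.intervalIntegral_preimage 0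
    (circleShare (fun i => (ξ i : UnitAddCircle)) k)
  rw [zero_add] at h
  rw [profit, ← h]
  refine intervalIntegral.integral_congr fun y hy => rho_eq_circleShare hξ ?_ k
  rwa [uIcc_of_le zero_le_one] at hy

variable {P : Fin n → UnitAddCircle} {k : Fin n} {z : UnitAddCircle}

lemma mem_circleNearest {j : Fin n} :
    j ∈ circleNearest P z ↔ ∀ i, dist (P j) z ≤ dist (P i) z := by
  simp [circleNearest]

lemma circleShare_nonneg : 0 ≤ circleShare P k z := by
  unfold circleShare; split_ifs <;> positivity

lemma circleShare_le_one : circleShare P k z ≤ 1 := by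
  unfold circleShare
  split_ifs with hk
  · exact div_le_one_of_le₀ (by exact_mod_cast Finset.card_pos.mpr ⟨k, hk⟩) (by positivity)
  · exact zero_le_one

lemma circleShare_eq_zero_of_notMem (hk : k ∉ circleNearest P z) : circleShare P k z = 0 :=
  if_neg hk

lemma circleShare_le_half {i : Fin n} (hik : i ≠ k) (hi : P i = P k) :
    circleShare P k z ≤ 1 / 2 := by
  unfold circleShare
  split_ifs with hk
  · have hi' : i ∈ circleNearest P z := mem_circleNearest.mpr (hi ▸ mem_circleNearest.mp hk)
    have hcard : 2 ≤ (circleNearest P z).card := by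
      simpa [Finset.card_pair hik] using
        Finset.card_le_card (Finset.insert_subset hi' (Finset.singleton_subset_iff.mpr hk))
    gcongr
    exact_mod_cast hcard
  · norm_num

lemma circleShare_eq_of_dist_lt (h : ∀ i, P i ≠ P k → dist (P k) z < dist (P i) z) :
    circleShare P k z = 1 / (Finset.univ.filter fun i => P i = P k).card := by
  have hnear : circleNearest P z = Finset.univ.filter fun i => P i = P k := by
    ext j
    simp only [mem_circleNearest, Finset.mem_filter, Finset.mem_univ, true_and]
    refine ⟨fun hj => by_contra fun hjk => (h j hjk).not_ge (hj k), fun hjk i => ?_⟩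
    rw [hjk]
    by_cases hik : P i = P k
    · rw [hik]
    · exact (h i hik).le
  rw [circleShare, hnear, if_pos (by simp)]

lemma circleShare_eq_of_separated {r : ℝ} (hsep : ∀ i, P i ≠ P k → 2 * r ≤ dist (P i) (P k))
    (hz : dist (P k) z < r) :
    circleShare P k z = 1 / (Finset.univ.filter fun i => P i = P k).card :=
  circleShare_eq_of_dist_lt fun i hi => by
    linarith [hsep i hi, dist_triangle (P i) z (P k), dist_comm z (P k)]

lemma circleShare_le_indicator {c : UnitAddCircle} {r v : ℝ} (hv : circleShare P k z ≤ v)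
    (hc : k ∈ circleNearest P z → z ∈ closedBall c r) :
    circleShare P k z ≤ (closedBall c r).indicator (fun _ => v) z := by
  by_cases hk : k ∈ circleNearest P z
  · rwa [indicator_of_mem (hc hk)]
  · rw [circleShare_eq_zero_of_notMem hk]
    exact indicator_nonneg (fun _ _ => circleShare_nonneg.trans hv) z

end CircleModel

section Deviation

variable {n N : ℕ} {P : Fin n → UnitAddCircle} {k : Fin n}

def OthersOccupyGrid (N : ℕ) (P : Fin n → UnitAddCircle) (k : Fin n) : Prop :=
  ∀ m : ℤ, ∃ i ≠ k, P i = ((m / N : ℝ) : UnitAddCircle)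

lemma dist_le_of_mem_circleNearest (hN : 0 < N) (hocc : OthersOccupyGrid N P k)
    {z : UnitAddCircle} (hk : k ∈ circleNearest P z) : dist (P k) z ≤ 1 / (2 * N) := by
  obtain ⟨m, hm⟩ := UnitAddCircle.exists_dist_intCast_div_le hN z
  obtain ⟨i, -, hi⟩ := hocc m
  calc dist (P k) z ≤ dist (P i) z := mem_circleNearest.mp hk i
    _ ≤ 1 / (2 * N) := by rw [hi, dist_comm]; exact hm

lemma circleShare_le_of_eq_gridPoint (hN : 0 < N) (hocc : OthersOccupyGrid N P k) {m : ℤ}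
    (hm : P k = ((m / N : ℝ) : UnitAddCircle)) (z : UnitAddCircle) :
    circleShare P k z ≤ (closedBall (P k) (1 / (2 * N))).indicator (fun _ => 1 / 2) z := by
  obtain ⟨i, hik, hi⟩ := hocc m
  exact circleShare_le_indicator (circleShare_le_half hik (hi.trans hm.symm))
    fun hk => mem_closedBall'.mpr (dist_le_of_mem_circleNearest hN hocc hk)

lemma circleShare_le_of_between_gridPoints (hocc : OthersOccupyGrid N P k) {m : ℤ} {x : ℝ}
    (hx : P k = x) (hl : m / N < x) (hr : x < (m + 1) / N) (z : UnitAddCircle) :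
    circleShare P k z ≤
      (closedBall (((m / N + 2 * x + (m + 1) / N) / 4 : ℝ) : UnitAddCircle)
        (1 / (4 * N))).indicator (fun _ => 1) z := by
  obtain ⟨il, -, hil⟩ := hocc m
  obtain ⟨ir, -, hir⟩ := hocc (m + 1)
  push_cast at hir
  refine circleShare_le_indicator circleShare_le_one fun hk => ?_
  have hcell := UnitAddCircle.dist_le_of_closer_than_neighbours hl hr (z := z)
    (by rw [← hx, ← hil]; exact mem_circleNearest.mp hk il)
    (by rw [← hx, ← hir]; exact mem_circleNearest.mp hk ir)
  rw [mem_closedBall]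
  exact hcell.trans_eq (by ring)

theorem integral_circleShare_le_of_othersOccupyGrid (hN : 0 < N)
    (hocc : OthersOccupyGrid N P k) : ∫ z, circleShare P k z ≤ 1 / (2 * N) := by
  have hN' : (1 : ℝ) ≤ N := by exact_mod_cast hN
  obtain ⟨x, hx⟩ := QuotientAddGroup.mk_surjective (P k)
  set m := ⌊x * N⌋
  have hml : (m : ℝ) / N ≤ x := by
    rw [div_le_iff₀ (by positivity)]; exact Int.floor_le _
  have hmr : x < (m + 1) / N := by
    rw [lt_div_iff₀ (by positivity)]; exact Int.lt_floor_add_one _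
  rcases hml.eq_or_lt with hxm | hxm
  · calc ∫ z, circleShare P k z ≤ min 1 (2 * (1 / (2 * N : ℝ))) * (1 / 2) :=
          UnitAddCircle.integral_le_of_le_indicator_closedBall (fun _ => circleShare_nonneg)
            (by positivity)
            (circleShare_le_of_eq_gridPoint hN hocc (hx.symm.trans (congrArg _ hxm.symm)))
      _ = 1 / (2 * N) := by
          rw [min_eq_right (by field_simp; exact hN')]; field_simp
  · calc ∫ z, circleShare P k z ≤ min 1 (2 * (1 / (4 * N : ℝ))) * 1 :=
          UnitAddCircle.integral_le_of_le_indicator_closedBall (fun _ => circleShare_nonneg)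
            (by positivity) (circleShare_le_of_between_gridPoints hocc hx.symm hxm hmr)
      _ = 1 / (2 * N) := by
          rw [min_eq_right (by field_simp; linarith)]; field_simp; ring

end Deviation

section Paired

variable {N : ℕ}

def pairedConfig (N : ℕ) (i : Fin (N + N)) : ℝ := ((i / 2 : ℕ) : ℝ) / N

lemma pairedConfig_mem_Icc (i : Fin (N + N)) : pairedConfig N i ∈ Icc (0 : ℝ) 1 := by
  refine ⟨by unfold pairedConfig; positivity, div_le_one_of_le₀ ?_ (Nat.cast_nonneg _)⟩
  exact_mod_cast (show (i : ℕ) / 2 ≤ N by omega)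

lemma card_filter_div_two_eq {j : ℕ} (hj : j < N) :
    (Finset.univ.filter fun i : Fin (N + N) => (i : ℕ) / 2 = j).card = 2 := by
  have hpair : (Finset.univ.filter fun i : Fin (N + N) => (i : ℕ) / 2 = j) =
      {⟨2 * j, by omega⟩, ⟨2 * j + 1, by omega⟩} := by
    ext i
    simp only [Finset.mem_filter, Finset.mem_univ, true_and, Finset.mem_insert,
      Finset.mem_singleton, Fin.ext_iff]
    omega
  rw [hpair, Finset.card_pair (by simp [Fin.ext_iff])]

lemma coe_pairedConfig_eq_iff {i k : Fin (N + N)} :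
    (pairedConfig N i : UnitAddCircle) = pairedConfig N k ↔ (i : ℕ) / 2 = k / 2 := by
  refine ⟨fun h => by_contra fun hik => ?_, fun h => by rw [pairedConfig, pairedConfig, h]⟩
  have hsep := UnitAddCircle.inv_le_dist_natCast_div (N := N) (by omega) (by omega) hik
  rw [← pairedConfig, ← pairedConfig, h, dist_self] at hsep
  have : (0 : ℝ) < N := by exact_mod_cast (show 0 < N by omega)
  exact (one_div_pos.mpr this).not_ge hsep

lemma othersOccupyGrid_of_eq_pairedConfig (hN : 0 < N) {ξ : Fin (N + N) → ℝ} {k : Fin (N + N)}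
    (hξ : ∀ i ≠ k, ξ i = pairedConfig N i) :
    OthersOccupyGrid N (fun i => (ξ i : UnitAddCircle)) k := by
  intro m
  have hN₀ : (0 : ℤ) < N := by omega
  have hm : (m % N).toNat < N := by
    have := Int.emod_lt_of_pos m hN₀; have := Int.emod_nonneg m hN₀.ne'; omega
  obtain ⟨i, hi, hik⟩ := Finset.exists_mem_ne (by rw [card_filter_div_two_eq hm]; norm_num) k
  refine ⟨i, hik, show (ξ i : UnitAddCircle) = _ from ?_⟩
  rw [hξ i hik, pairedConfig, (Finset.mem_filter.mp hi).2,
    UnitAddCircle.coe_intCast_div_eq_emod hN m]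
  congr
  exact_mod_cast Int.toNat_of_nonneg (Int.emod_nonneg m hN₀.ne')

theorem integral_circleShare_pairedConfig (hN : 0 < N) (k : Fin (N + N)) :
    ∫ z, circleShare (fun i => (pairedConfig N i : UnitAddCircle)) k z = 1 / (2 * N) := by
  set P := fun i => (pairedConfig N i : UnitAddCircle)
  have hN' : (1 : ℝ) ≤ N := by exact_mod_cast hN
  have hsep : ∀ i, P i ≠ P k → 2 * (1 / (2 * N)) ≤ dist (P i) (P k) := fun i hi => by
    have := UnitAddCircle.inv_le_dist_natCast_div (N := N) (by omega) (by omega)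
      (coe_pairedConfig_eq_iff.not.mp hi)
    rwa [show (2 : ℝ) * (1 / (2 * N)) = 1 / N by field_simp]
  have hocc : OthersOccupyGrid N P k := othersOccupyGrid_of_eq_pairedConfig hN fun _ _ => rfl
  have hae : ∀ᵐ z, circleShare P k z =
      (closedBall (P k) (1 / (2 * N))).indicator (fun _ => 1 / 2) z := by
    filter_upwards [measure_eq_zero_iff_ae_notMem.mp
      (UnitAddCircle.volume_sphere_eq_zero (P k) (1 / (2 * N)))] with z hz
    rcases lt_or_gt_of_ne (mt mem_sphere'.mpr hz) with hlt | hgt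
    · rw [indicator_of_mem (mem_closedBall'.mpr hlt.le), circleShare_eq_of_separated hsep hlt,
        Finset.filter_congr fun i _ => coe_pairedConfig_eq_iff, card_filter_div_two_eq (by omega)]
      norm_num
    · rw [indicator_of_notMem (mt mem_closedBall'.mp hgt.not_ge), circleShare_eq_zero_of_notMem
        fun hk => (dist_le_of_mem_circleNearest hN hocc hk).not_gt hgt]
  rw [integral_congr_ae hae, UnitAddCircle.integral_indicator_closedBall _ (by positivity),
    min_eq_right (by field_simp; exact hN')]
  field_simp

end Paired

theorem paired_equally_spaced_equilibrium_general {n : ℕ} (hev : Even n) :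
    IsEquilibrium (fun k : Fin n => (((k : ℕ) / 2 : ℕ) : ℝ) * 2 / n) ∧
    ∀ k : Fin n, profit k (fun k : Fin n => (((k : ℕ) / 2 : ℕ) : ℝ) * 2 / n) = 1 / n := by
  obtain ⟨N, rfl⟩ := hev
  have hconfig : (fun k : Fin (N + N) => (((k : ℕ) / 2 : ℕ) : ℝ) * 2 / ((N + N : ℕ) : ℝ)) =
      pairedConfig N := by
    funext k; rw [pairedConfig]; push_cast; ring
  have hN : ∀ k : Fin (N + N), 0 < N := fun k => by have := k.isLt; omega
  have hvalue : ∀ k, profit k (pairedConfig N) = 1 / ((N + N : ℕ) : ℝ) := fun k => by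
    rw [profit_eq_integral_circleShare pairedConfig_mem_Icc,
      integral_circleShare_pairedConfig (hN k)]
    push_cast; ring
  rw [hconfig]
  refine ⟨fun k x' hx' => ?_, hvalue⟩
  have hξ : ∀ i, Function.update (pairedConfig N) k x' i ∈ Icc (0 : ℝ) 1 :=
    Function.forall_update_iff _ (p := fun _ v => v ∈ Icc (0 : ℝ) 1) |>.mpr
      ⟨hx', fun i _ => pairedConfig_mem_Icc i⟩
  rw [hvalue, profit_eq_integral_circleShare hξ]
  calc _ ≤ 1 / (2 * N : ℝ) := integral_circleShare_le_of_othersOccupyGrid (hN k)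
        (othersOccupyGrid_of_eq_pairedConfig (hN k) fun i hik => Function.update_of_ne hik _ _)
    _ = 1 / ((N + N : ℕ) : ℝ) := by push_cast; ring

theorem paired_equally_spaced_equilibrium {n : ℕ} [NeZero n] (hn : 4 ≤ n)
    (hev : Even n) :
    IsEquilibrium (fun k : Fin n => (((k : ℕ) / 2 : ℕ) : ℝ) * 2 / n) ∧
    ∀ k : Fin n, profit k (fun k : Fin n => (((k : ℕ) / 2 : ℕ) : ℝ) * 2 / n) = 1 / n :=
  paired_equally_spaced_equilibrium_general hev
end
end
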